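/- For a cube Q = Q(x₀, r) with diameter r < 1 and measurable exponent q with 1 ≤ q₋ ≤ q₊ < ∞, there are positive constants a₁, a₂ (depending only on q) with a₁ |Q|^{1/q₋(Q)} ≤ ‖χ_Q‖_{L^{q(·)}} ≤ a₂ |Q|^{1/q₊(Q)}; if r > 1 the reverse-type estimates hold: c₁ |Q|^{1/q₊(Q)} ≤ ‖χ_Q‖_{L^{q(·)}} ≤ c₂ |Q|^{1/q₋(Q)}. Consequently ‖χ_Q‖_{q(·)} ≤ max{|Q|^{1/q₊(Q)}, |Q|^{1/q₋(Q)}} for every cube. -/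
import Mathlib


open MeasureTheory ENNReal Set

/-- The axis-parallel cube `Q(c, r)` with "lower corner" `c` and side length `r`. -/
def cube {n : ℕ} (c : Fin n → ℝ) (r : ℝ) : Set (Fin n → ℝ) :=
  Set.univ.pi fun i => Set.Icc (c i) (c i + r)

/-- The Luxemburg norm on the variable exponent Lebesgue space. -/
noncomputable def luxNorm {n : ℕ} (q : (Fin n → ℝ) → ℝ) (f : (Fin n → ℝ) → ℝ) : ℝ :=
  sInf {η : ℝ | 0 < η ∧
    ∫⁻ x, ENNReal.ofReal ((|f x| / η) ^ q x) ∂(volume : Measure (Fin n → ℝ)) ≤ 1}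

/-- `q₋(Q)`: the essential infimum of `q` over `Q`. -/
noncomputable def qMinus {n : ℕ} (q : (Fin n → ℝ) → ℝ) (Q : Set (Fin n → ℝ)) : ℝ :=
  essInf q ((volume : Measure (Fin n → ℝ)).restrict Q)

/-- `q₊(Q)`: the essential supremum of `q` over `Q`. -/
noncomputable def qPlus {n : ℕ} (q : (Fin n → ℝ) → ℝ) (Q : Set (Fin n → ℝ)) : ℝ :=
  essSup q ((volume : Measure (Fin n → ℝ)).restrict Q)

lemma cube_measurableSet {n : ℕ} (c : Fin n → ℝ) (r : ℝ) : MeasurableSet (cube c r) :=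
  MeasurableSet.univ_pi fun _ => measurableSet_Icc

lemma cube_volume {n : ℕ} (c : Fin n → ℝ) (r : ℝ) (hr : 0 ≤ r) :
    volume (cube c r) = ENNReal.ofReal (r ^ n) := by
  rw [cube, volume_pi_pi]
  have h : ∀ i : Fin n, volume (Set.Icc (c i) (c i + r)) = ENNReal.ofReal r := by
    intro i; rw [Real.volume_Icc, add_sub_cancel_left]
  rw [Finset.prod_congr rfl (fun i _ => h i), Finset.prod_const, Finset.card_univ,
    Fintype.card_fin, ← ENNReal.ofReal_pow hr]


set_option maxHeartbeats 1000000 in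
lemma key {n : ℕ} {q : (Fin n → ℝ) → ℝ} {qm qp : ℝ} (hqm : 1 ≤ qm)
    (hbound : ∀ x, qm ≤ q x ∧ q x ≤ qp)
    (Q : Set (Fin n → ℝ)) (hQ : MeasurableSet Q) (v : ℝ) (hv0 : 0 < v)
    (hvol : volume Q = ENNReal.ofReal v) :
    (v ≤ 1 → v ^ (1 / qMinus q Q) ≤ luxNorm q (Q.indicator fun _ => 1) ∧
        luxNorm q (Q.indicator fun _ => 1) ≤ v ^ (1 / qPlus q Q)) ∧
    (1 ≤ v → v ^ (1 / qPlus q Q) ≤ luxNorm q (Q.indicator fun _ => 1) ∧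
        luxNorm q (Q.indicator fun _ => 1) ≤ v ^ (1 / qMinus q Q)) := by
  set μ := (volume : Measure (Fin n → ℝ)).restrict Q with hμdef
  have hμ : μ ≠ 0 := by
    refine Measure.measure_univ_ne_zero.1 ?_
    rw [hμdef, Measure.restrict_apply_univ, hvol]
    simp [ENNReal.ofReal_pos.2 hv0, (ENNReal.ofReal_pos.2 hv0).ne']
  haveI : (ae μ).NeBot := ae_neBot.2 hμ
  set A := qMinus q Q with hAdef
  set B := qPlus q Q with hBdef
  have hbddA : Filter.IsBoundedUnder (· ≥ ·) (ae μ) q :=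
    Filter.isBoundedUnder_of ⟨qm, fun x => (hbound x).1⟩
  have hbddB : Filter.IsBoundedUnder (· ≤ ·) (ae μ) q :=
    Filter.isBoundedUnder_of ⟨qp, fun x => (hbound x).2⟩
  have haeA : ∀ᵐ x ∂μ, A ≤ q x := _root_.ae_essInf_le hbddA
  have haeB : ∀ᵐ x ∂μ, q x ≤ B := _root_.ae_le_essSup hbddB
  have hA1 : 1 ≤ A := by
    refine le_trans hqm ?_
    rw [hAdef, qMinus, essInf]
    exact Filter.le_liminf_of_le (hbddB.isCoboundedUnder_ge)
      (Filter.Eventually.of_forall fun x => (hbound x).1)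
  have hA0 : (0:ℝ) < A := lt_of_lt_of_le one_pos hA1
  have hAB : A ≤ B := by
    obtain ⟨x, hx1, hx2⟩ := (haeA.and haeB).exists
    linarith
  have hB0 : (0:ℝ) < B := lt_of_lt_of_le hA0 hAB
  set S := {η : ℝ | 0 < η ∧
    ∫⁻ x, ENNReal.ofReal ((|Q.indicator (fun _ => (1:ℝ)) x| / η) ^ q x)
      ∂(volume : Measure (Fin n → ℝ)) ≤ 1} with hSdef
  have hlux : luxNorm q (Q.indicator fun _ => (1:ℝ)) = sInf S := rfl
  have hrho : ∀ η : ℝ,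
      (∫⁻ x, ENNReal.ofReal ((|Q.indicator (fun _ => (1:ℝ)) x| / η) ^ q x)
        ∂(volume : Measure (Fin n → ℝ)))
      = ∫⁻ x, ENNReal.ofReal ((η⁻¹) ^ q x) ∂μ := by
    intro η
    rw [hμdef, ← lintegral_indicator hQ]
    congr 1; funext x
    by_cases hx : x ∈ Q
    · simp [hx, abs_one, one_div]
    · have hq0 : q x ≠ 0 := by have := (hbound x).1; linarith
      simp [hx, Real.zero_rpow hq0]
  have hBdd : BddBelow S := ⟨0, fun x hx => hx.1.le⟩
  -- upper membership helper
  have upper : ∀ e : ℝ, 0 < e → v ^ (-(A/e)) ≤ v⁻¹ → v ^ (-(B/e)) ≤ v⁻¹ →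
      v ^ (1/e) ∈ S := by
    intro e he h1 h2
    have hη0 : (0:ℝ) < v ^ (1/e) := Real.rpow_pos_of_pos hv0 _
    refine ⟨hη0, ?_⟩
    rw [hrho]
    have hptwise : ∀ᵐ x ∂μ,
        ENNReal.ofReal (((v ^ (1/e))⁻¹) ^ q x) ≤ ENNReal.ofReal v⁻¹ := by
      filter_upwards [haeA, haeB] with x h1x h2x
      apply ENNReal.ofReal_le_ofReal
      have hrw : ((v ^ (1/e))⁻¹ : ℝ) ^ q x = v ^ (-(q x / e)) := by
        rw [← Real.rpow_neg hv0.le, ← Real.rpow_mul hv0.le]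
        congr 1; ring
      rw [hrw]
      rcases le_total v 1 with hv1 | hv1
      · refine le_trans (Real.rpow_le_rpow_of_exponent_ge hv0 hv1 ?_) h2
        have : q x / e ≤ B / e := by gcongr
        linarith
      · refine le_trans (Real.rpow_le_rpow_of_exponent_le hv1 ?_) h1
        have : A / e ≤ q x / e := by gcongr
        linarith
    calc ∫⁻ x, ENNReal.ofReal (((v ^ (1/e))⁻¹) ^ q x) ∂μ
        ≤ ∫⁻ _x, ENNReal.ofReal v⁻¹ ∂μ := lintegral_mono_ae hptwise
      _ = ENNReal.ofReal v⁻¹ * volume Q := by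
          rw [lintegral_const, hμdef, Measure.restrict_apply_univ]
      _ = 1 := by
          rw [hvol, ← ENNReal.ofReal_mul (by positivity), inv_mul_cancel₀ hv0.ne',
            ENNReal.ofReal_one]
  -- lower bound helper
  have lower : ∀ e : ℝ, 0 < e → v⁻¹ ≤ v ^ (-(A/e)) → v⁻¹ ≤ v ^ (-(B/e)) →
      S.Nonempty → v ^ (1/e) ≤ sInf S := by
    intro e he h1 h2 hne
    refine le_csInf hne ?_
    rintro η ⟨hη0, hρ⟩
    by_contra hcon
    push_neg at hcon
    rw [hrho] at hρ
    set t := η⁻¹ with htdef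
    set t₀ := v ^ (-(1/e)) with ht₀def
    have ht₀ : t₀ = (v ^ ((1:ℝ)/e))⁻¹ := Real.rpow_neg hv0.le _
    have htt : t₀ < t := by
      rw [ht₀, htdef]
      exact inv_strictAnti₀ hη0 hcon
    have ht₀0 : 0 < t₀ := Real.rpow_pos_of_pos hv0 _
    have ht0 : 0 < t := lt_trans ht₀0 htt
    set m := min (t ^ A) (t ^ B) with hm
    have hm0 : 0 < m := lt_min (Real.rpow_pos_of_pos ht0 _) (Real.rpow_pos_of_pos ht0 _)
    have r1 : t₀ ^ A = v ^ (-(A/e)) := by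
      rw [ht₀def, ← Real.rpow_mul hv0.le]; congr 1; ring
    have r2 : t₀ ^ B = v ^ (-(B/e)) := by
      rw [ht₀def, ← Real.rpow_mul hv0.le]; congr 1; ring
    have hmv : v⁻¹ < m := by
      refine lt_min ?_ ?_
      · calc v⁻¹ ≤ v ^ (-(A/e)) := h1
          _ = t₀ ^ A := r1.symm
          _ < t ^ A := Real.rpow_lt_rpow ht₀0.le htt hA0
      · calc v⁻¹ ≤ v ^ (-(B/e)) := h2
          _ = t₀ ^ B := r2.symm
          _ < t ^ B := Real.rpow_lt_rpow ht₀0.le htt hB0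
    have hae : ∀ᵐ x ∂μ, ENNReal.ofReal m ≤ ENNReal.ofReal (t ^ q x) := by
      filter_upwards [haeA, haeB] with x h1x h2x
      apply ENNReal.ofReal_le_ofReal
      rcases le_total t 1 with ht1 | ht1
      · exact le_trans (min_le_right _ _) (Real.rpow_le_rpow_of_exponent_ge ht0 ht1 h2x)
      · exact le_trans (min_le_left _ _) (Real.rpow_le_rpow_of_exponent_le ht1 h1x)
    have hgt : (1:ℝ≥0∞) < ∫⁻ x, ENNReal.ofReal (t ^ q x) ∂μ := by
      calc (1:ℝ≥0∞) = ENNReal.ofReal (v⁻¹ * v) := by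
            rw [inv_mul_cancel₀ hv0.ne', ENNReal.ofReal_one]
        _ < ENNReal.ofReal (m * v) := by
            rw [ENNReal.ofReal_lt_ofReal_iff (by positivity)]
            exact mul_lt_mul_of_pos_right hmv hv0
        _ = ENNReal.ofReal m * volume Q := by rw [hvol, ENNReal.ofReal_mul hm0.le]
        _ = ∫⁻ _x, ENNReal.ofReal m ∂μ := by
            rw [lintegral_const, hμdef, Measure.restrict_apply_univ]
        _ ≤ _ := lintegral_mono_ae hae
    exact absurd hρ (not_le.2 hgt)
  have hvA : v ^ (-(A/A)) = v⁻¹ := by rw [div_self hA0.ne', Real.rpow_neg_one]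
  have hvB : v ^ (-(B/B)) = v⁻¹ := by rw [div_self hB0.ne', Real.rpow_neg_one]
  constructor
  · intro hv1
    have c1 : v ^ (-(A/B)) ≤ v⁻¹ := by
      rw [← Real.rpow_neg_one v]
      exact Real.rpow_le_rpow_of_exponent_ge hv0 hv1 (neg_le_neg ((div_le_one hB0).2 hAB))
    have hmem : v ^ (1/B) ∈ S := upper B hB0 c1 hvB.le
    have c4 : v⁻¹ ≤ v ^ (-(B/A)) := by
      rw [← Real.rpow_neg_one v]
      exact Real.rpow_le_rpow_of_exponent_ge hv0 hv1 (neg_le_neg ((one_le_div hA0).2 hAB))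
    refine ⟨?_, ?_⟩
    · rw [hlux]; exact lower A hA0 hvA.ge c4 ⟨_, hmem⟩
    · rw [hlux]; exact csInf_le hBdd hmem
  · intro hv1
    have c2 : v ^ (-(B/A)) ≤ v⁻¹ := by
      rw [← Real.rpow_neg_one v]
      exact Real.rpow_le_rpow_of_exponent_le hv1 (neg_le_neg ((one_le_div hA0).2 hAB))
    have hmem : v ^ (1/A) ∈ S := upper A hA0 hvA.le c2
    have c3 : v⁻¹ ≤ v ^ (-(A/B)) := by
      rw [← Real.rpow_neg_one v]
      exact Real.rpow_le_rpow_of_exponent_le hv1 (neg_le_neg ((div_le_one hB0).2 hAB))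
    refine ⟨?_, ?_⟩
    · rw [hlux]; exact lower B hB0 c3 hvB.ge ⟨_, hmem⟩
    · rw [hlux]; exact csInf_le hBdd hmem

/-- two-sided estimates for `‖χ_Q‖_{q(·)}` for small (`r < 1`) and
large (`r > 1`) cubes, and the resulting bound
`‖χ_Q‖_{q(·)} ≤ max{|Q|^{1/q₊(Q)}, |Q|^{1/q₋(Q)}}` for every cube. -/
theorem characteristic_norm_small_large {n : ℕ} (q : (Fin n → ℝ) → ℝ)
    (hmeas : Measurable q) (qm qp : ℝ) (hqm : 1 ≤ qm)
    (hbound : ∀ x, qm ≤ q x ∧ q x ≤ qp) :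
    (∃ a₁ a₂ : ℝ, 0 < a₁ ∧ 0 < a₂ ∧ ∀ (c : Fin n → ℝ) (r : ℝ), 0 < r → r < 1 →
      a₁ * (volume (cube c r)).toReal ^ (1 / qMinus q (cube c r)) ≤
          luxNorm q ((cube c r).indicator fun _ => (1:ℝ)) ∧
        luxNorm q ((cube c r).indicator fun _ => (1:ℝ)) ≤
          a₂ * (volume (cube c r)).toReal ^ (1 / qPlus q (cube c r))) ∧
    (∃ c₁ c₂ : ℝ, 0 < c₁ ∧ 0 < c₂ ∧ ∀ (c : Fin n → ℝ) (r : ℝ), 1 < r →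
      c₁ * (volume (cube c r)).toReal ^ (1 / qPlus q (cube c r)) ≤
          luxNorm q ((cube c r).indicator fun _ => (1:ℝ)) ∧
        luxNorm q ((cube c r).indicator fun _ => (1:ℝ)) ≤
          c₂ * (volume (cube c r)).toReal ^ (1 / qMinus q (cube c r))) ∧
    (∀ (c : Fin n → ℝ) (r : ℝ), 0 < r →
      luxNorm q ((cube c r).indicator fun _ => (1:ℝ)) ≤
        max ((volume (cube c r)).toReal ^ (1 / qPlus q (cube c r)))
          ((volume (cube c r)).toReal ^ (1 / qMinus q (cube c r)))) := by
  have main : ∀ (c : Fin n → ℝ) (r : ℝ), 0 < r →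
      (volume (cube c r)).toReal = r ^ n ∧
      ((r ^ n ≤ 1 → (r^n) ^ (1 / qMinus q (cube c r)) ≤
          luxNorm q ((cube c r).indicator fun _ => 1) ∧
          luxNorm q ((cube c r).indicator fun _ => 1) ≤ (r^n) ^ (1 / qPlus q (cube c r))) ∧
       (1 ≤ r ^ n → (r^n) ^ (1 / qPlus q (cube c r)) ≤
          luxNorm q ((cube c r).indicator fun _ => 1) ∧
          luxNorm q ((cube c r).indicator fun _ => 1) ≤ (r^n) ^ (1 / qMinus q (cube c r)))) := by
    intro c r hr
    have hv0 : (0:ℝ) < r ^ n := by positivity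
    have hvol := cube_volume c r hr.le
    refine ⟨by rw [hvol, ENNReal.toReal_ofReal hv0.le], ?_⟩
    exact key hqm hbound (cube c r) (cube_measurableSet c r) (r ^ n) hv0 hvol
  refine ⟨⟨1, 1, one_pos, one_pos, ?_⟩, ⟨1, 1, one_pos, one_pos, ?_⟩, ?_⟩
  · intro c r hr hr1
    obtain ⟨hv, hsmall, _⟩ := main c r hr
    have hle : r ^ n ≤ 1 := pow_le_one₀ hr.le hr1.le
    obtain ⟨h1, h2⟩ := hsmall hle
    rw [hv, one_mul, one_mul]
    exact ⟨h1, h2⟩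
  · intro c r hr
    have hr0 : (0:ℝ) < r := lt_trans one_pos hr
    obtain ⟨hv, _, hlarge⟩ := main c r hr0
    have hle : 1 ≤ r ^ n := one_le_pow₀ hr.le
    obtain ⟨h1, h2⟩ := hlarge hle
    rw [hv, one_mul, one_mul]
    exact ⟨h1, h2⟩
  · intro c r hr
    obtain ⟨hv, hsmall, hlarge⟩ := main c r hr
    rw [hv]
    rcases le_total (r ^ n) 1 with hle | hle
    · exact le_max_of_le_left (hsmall hle).2
    · exact le_max_of_le_right (hlarge hle).2
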